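/- Under the same assumptions (H(t) = Σᵢ fᵢ(t)Hᵢ self-adjoint on common domain 𝒟, with a uniform relative bound ‖HᵢΨ‖ ≤ K(‖H(t)Ψ‖+‖Ψ‖), and fᵢ continuous on a compact interval I), for every Φ ∈ ℋ one has lim_{t→s} S̃(t)S̃(s)⁻¹Φ = Φ, uniformly in s ∈ I, where S̃(t) = iH(t) + I. -/
import Mathlib


open scoped ComplexInnerProductSpace
open Set

noncomputable section

def IsSelfAdjointOn {ℋ : Type*} [NormedAddCommGroup ℋ] [InnerProductSpace ℂ ℋ]
    (D : Submodule ℂ ℋ) (H : D →ₗ[ℂ] ℋ) : Prop :=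
  (∀ x y : D, ⟪H x, (y : ℋ)⟫ = ⟪(x : ℋ), H y⟫) ∧
  ∀ y z : ℋ, (∀ x : D, ⟪H x, y⟫ = ⟪(x : ℋ), z⟫) → ∃ hy : y ∈ D, H ⟨y, hy⟩ = z

lemma norm_I_smul_add_sq' {ℋ : Type*} [NormedAddCommGroup ℋ] [InnerProductSpace ℂ ℋ]
    (A x : ℋ) (him : (⟪A, x⟫).im = 0) :
    ‖Complex.I • A + x‖ ^ 2 = ‖A‖ ^ 2 + ‖x‖ ^ 2 := by
  have h := @norm_add_sq ℂ _ _ _ _ (Complex.I • A) x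
  have hre : RCLike.re ⟪Complex.I • A, x⟫ = 0 := by
    rw [inner_smul_left]
    simp [Complex.mul_re, him]
  have hnorm : ‖Complex.I • A‖ = ‖A‖ := by
    rw [norm_smul, Complex.norm_I, one_mul]
  rw [hre, hnorm] at h
  simpa using h

/-- (Lemma 2.) Under the assumptions of Lemma 1, with `fᵢ` continuous on the compact
interval `I = [a,b]`, for every `Φ ∈ ℋ` one has `S̃(t)S̃(s)⁻¹Φ → Φ` as `t → s`,
uniformly in `s ∈ I`, where `S̃(t) = iH(t) + I`. -/
theorem S_t_S_s_inv_tendsto_id {ℋ : Type*} [NormedAddCommGroup ℋ]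
    [InnerProductSpace ℂ ℋ] [CompleteSpace ℋ]
    (D : Submodule ℂ ℋ) (hD : Dense (D : Set ℋ))
    (n : ℕ) (H : Fin n → (D →ₗ[ℂ] ℋ)) (f : Fin n → ℝ → ℝ) (a b : ℝ) (hab : a ≤ b)
    (hsym : ∀ i, ∀ x y : D, ⟪H i x, (y : ℋ)⟫ = ⟪(x : ℋ), H i y⟫)
    (hf : ∀ i, ContinuousOn (f i) (Icc a b))
    (hsa : ∀ t ∈ Icc a b, IsSelfAdjointOn D (∑ i, ((f i t : ℂ)) • H i))
    (K : ℝ) (hK : 0 < K)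
    (hbound : ∀ i, ∀ t ∈ Icc a b, ∀ Ψ : D,
      ‖H i Ψ‖ ≤ K * (‖(∑ j, ((f j t : ℂ)) • H j) Ψ‖ + ‖(Ψ : ℋ)‖)) :
    ∀ Φ : ℋ, ∀ ε > 0, ∃ δ > 0, ∀ s ∈ Icc a b, ∀ t ∈ Icc a b, |t - s| < δ →
      ∀ x : D, Complex.I • ((∑ j, ((f j s : ℂ)) • H j) x) + (x : ℋ) = Φ →
        ‖Complex.I • ((∑ j, ((f j t : ℂ)) • H j) x) + (x : ℋ) - Φ‖ < ε := by
  intro Φ ε hε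
  set C : ℝ := 2 * K * (‖Φ‖ + 1) * (n + 1) with hC
  have hCpos : 0 < C := by positivity
  have hFcont : ContinuousOn (fun t => (fun i => f i t : Fin n → ℝ)) (Icc a b) :=
    continuousOn_pi.mpr hf
  have hUC := isCompact_Icc.uniformContinuousOn_of_continuous hFcont
  rw [Metric.uniformContinuousOn_iff] at hUC
  obtain ⟨δ, hδ, hδ'⟩ := hUC (ε / C) (by positivity)
  refine ⟨δ, hδ, ?_⟩
  intro s hs t ht hts x hx
  set A := (∑ j, ((f j s : ℂ)) • H j) x with hA
  -- inner product ⟪A, x⟫ is real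
  have hreal : ∀ j, (⟪H j x, (x : ℋ)⟫).im = 0 := by
    intro j
    have h1 : ⟪H j x, (x : ℋ)⟫ = (starRingEnd ℂ) ⟪H j x, (x : ℋ)⟫ :=
      (hsym j x x).trans (inner_conj_symm _ _).symm
    exact Complex.conj_eq_iff_im.mp h1.symm
  have him : (⟪A, (x : ℋ)⟫).im = 0 := by
    rw [hA, LinearMap.sum_apply, sum_inner]
    rw [Complex.im_sum]
    refine Finset.sum_eq_zero fun j _ => ?_
    rw [LinearMap.smul_apply, inner_smul_left, Complex.conj_ofReal]
    simp [Complex.mul_im, hreal j]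
  have hsq : ‖Φ‖ ^ 2 = ‖A‖ ^ 2 + ‖(x : ℋ)‖ ^ 2 := by
    rw [← hx]; exact norm_I_smul_add_sq' _ _ him
  have hxle : ‖(x : ℋ)‖ ≤ ‖Φ‖ := by
    nlinarith [norm_nonneg A, norm_nonneg Φ, norm_nonneg ((x : ℋ))]
  have hAle : ‖A‖ ≤ ‖Φ‖ := by
    nlinarith [norm_nonneg A, norm_nonneg Φ, norm_nonneg ((x : ℋ))]
  have hHjx : ∀ j, ‖H j x‖ ≤ 2 * K * (‖Φ‖ + 1) := by
    intro j
    have h1 := hbound j s hs x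
    rw [← hA] at h1
    nlinarith
  -- the difference
  have hdiff : Complex.I • ((∑ j, ((f j t : ℂ)) • H j) x) + (x : ℋ) - Φ
      = Complex.I • (∑ j, (((f j t : ℂ)) - ((f j s : ℂ))) • H j x) := by
    rw [← hx, hA, LinearMap.sum_apply, LinearMap.sum_apply]
    have h2 : (∑ d : Fin n, (((f d t : ℂ)) • H d) x) - ∑ d : Fin n, (((f d s : ℂ)) • H d) x
        = ∑ j, (((f j t : ℂ)) - ((f j s : ℂ))) • H j x := by
      rw [← Finset.sum_sub_distrib]
      exact Finset.sum_congr rfl fun j _ => by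
        rw [LinearMap.smul_apply, LinearMap.smul_apply, sub_smul]
    rw [← h2, smul_sub]
    abel
  have hdistf : ∀ j : Fin n, |f j t - f j s| ≤ ε / C := by
    intro j
    have h1 : dist t s < δ := by rwa [Real.dist_eq]
    have h2 := hδ' t ht s hs h1
    have h3 : dist (f j t) (f j s) ≤ dist (fun i => f i t : Fin n → ℝ) (fun i => f i s) :=
      dist_le_pi_dist (fun i => f i t) (fun i => f i s) j
    rw [Real.dist_eq] at h3
    exact h3.trans h2.le
  rw [hdiff, norm_smul, Complex.norm_I, one_mul]
  calc ‖∑ j, (((f j t : ℂ)) - ((f j s : ℂ))) • H j x‖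
      ≤ ∑ j : Fin n, ‖(((f j t : ℂ)) - ((f j s : ℂ))) • H j x‖ := norm_sum_le _ _
    _ ≤ ∑ _j : Fin n, (ε / C) * (2 * K * (‖Φ‖ + 1)) := by
        refine Finset.sum_le_sum fun j _ => ?_
        rw [norm_smul]
        have h1 : ‖((f j t : ℂ)) - ((f j s : ℂ))‖ = |f j t - f j s| := by
          rw [← Complex.ofReal_sub, Complex.norm_real, Real.norm_eq_abs]
        rw [h1]
        have := hHjx j
        have := hdistf j
        have := abs_nonneg (f j t - f j s)
        have := norm_nonneg (H j x)
        nlinarith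
    _ = n * ((ε / C) * (2 * K * (‖Φ‖ + 1))) := by
        rw [Finset.sum_const, Finset.card_univ, Fintype.card_fin, nsmul_eq_mul]
    _ < ε := by
        rw [hC, div_mul_eq_mul_div, ← mul_div_assoc, div_lt_iff₀ (by positivity)]
        have h2 : (0:ℝ) < 2 * K * (‖Φ‖ + 1) := by positivity
        nlinarith [mul_pos hε h2]
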